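/- Define g : ℝ_max^2 → ℝ_max by g(x,y) = max( x, y, (x+y)/3 ), where (x+y)/3 = -∞ if x = -∞ or y = -∞. Then (i) E(g(x,-∞))/e^x → 1 as x → -∞ and E(g(-∞,y))/e^y → 1 as y → -∞ (so both tropical derivatives of g at ε equal 0), but (ii) there exists no row vector a = (a_1,a_2) ∈ ℝ_max^{1×2} giving a tropical linear approximation of g at ε; indeed along the diagonal x = y one has |E(g(x,x)) − e^x| / e^x → +∞ as x → -∞. -/

import Mathlib

open Filter Topology

/-- `E(t) = e^t` for real `t`, and `E(-∞) = 0`. -/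
noncomputable def E : WithBot ℝ → ℝ :=
  WithBot.recBotCoe 0 Real.exp

/-- The magnitude `‖x‖ = max_i E(x_i) = e^{max_i x_i}` of a tropical vector. -/
noncomputable def tnorm {n : ℕ} (x : Fin n → WithBot ℝ) : ℝ :=
  E (Finset.univ.sup x)

/-- Tropical product of a row vector and a column vector: `a ⊗ x = max_j (a_j + x_j)`. -/
noncomputable def tdot {n : ℕ} (a x : Fin n → WithBot ℝ) : WithBot ℝ :=
  Finset.univ.sup fun j => a j + x j

/-- The tropical zero vector `ε = (-∞, …, -∞)ᵀ`. -/
def botVec (n : ℕ) : Fin n → WithBot ℝ := fun _ => ⊥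

/-- The row vector `a` gives a tropical linear approximation of `g` at `ε`:
`d(g(x), a ⊗ x) / ‖x‖ → 0` as `x → ε`. -/
def IsTropLinApprox {n : ℕ} (g : (Fin n → WithBot ℝ) → WithBot ℝ)
    (a : Fin n → WithBot ℝ) : Prop :=
  ∀ η : ℝ, 0 < η → ∃ δ : ℝ, 0 < δ ∧ ∀ x : Fin n → WithBot ℝ,
    0 < tnorm x → tnorm x < δ → |E (g x) - E (tdot a x)| ≤ η * tnorm x

/-- `lam` is a (tropical) eigenvalue of `A`. -/
def IsEigenvalue {n : ℕ} (A : Fin n → Fin n → WithBot ℝ) (lam : WithBot ℝ) : Prop :=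
  ∃ x : Fin n → WithBot ℝ, x ≠ botVec n ∧ ∀ i, tdot (A i) x = lam + x i

/-- A circuit (closed walk) of length `ℓ ≥ 1` in the weighted digraph `G(A)`. -/
def IsCircuit {n : ℕ} (A : Fin n → Fin n → WithBot ℝ) (ℓ : ℕ) (c : ℕ → Fin n) : Prop :=
  1 ≤ ℓ ∧ c ℓ = c 0 ∧ ∀ k < ℓ, A (c k) (c (k + 1)) ≠ ⊥

/-- The weight of a circuit: the sum of its edge weights. -/
noncomputable def circuitWeight {n : ℕ} (A : Fin n → Fin n → WithBot ℝ)
    (ℓ : ℕ) (c : ℕ → Fin n) : WithBot ℝ :=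
  ∑ k ∈ Finset.range ℓ, A (c k) (c (k + 1))

/-- Tropical matrix product. -/
noncomputable def tmul {n : ℕ} (A B : Fin n → Fin n → WithBot ℝ) :
    Fin n → Fin n → WithBot ℝ :=
  fun i j => Finset.univ.sup fun k => A i k + B k j

/-- Tropical matrix power; `A^{⊗0}` is the tropical identity matrix. -/
noncomputable def tpow {n : ℕ} (A : Fin n → Fin n → WithBot ℝ) :
    ℕ → Fin n → Fin n → WithBot ℝ
  | 0 => fun i j => if i = j then (0 : WithBot ℝ) else ⊥
  | k + 1 => tmul (tpow A k) A

/-- `G(A)` is strongly connected (i.e. `A` is irreducible). -/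
def StronglyConnected {n : ℕ} (A : Fin n → Fin n → WithBot ℝ) : Prop :=
  ∀ i j : Fin n, ∃ (ℓ : ℕ) (c : ℕ → Fin n),
    c 0 = i ∧ c ℓ = j ∧ ∀ k < ℓ, A (c k) (c (k + 1)) ≠ ⊥

/-- Stability of the fixed point `ε` of `x ↦ f(x)`. -/
def TropStable {n : ℕ} (f : (Fin n → WithBot ℝ) → (Fin n → WithBot ℝ)) : Prop :=
  ∀ α : ℝ, 0 < α → ∃ δ : ℝ, 0 < δ ∧
    ∀ x0 : Fin n → WithBot ℝ, tnorm x0 < δ → ∀ t : ℕ, tnorm (f^[t] x0) < α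

/-- Asymptotic stability of the fixed point `ε` of `x ↦ f(x)`. -/
def TropAsymptoticallyStable {n : ℕ}
    (f : (Fin n → WithBot ℝ) → (Fin n → WithBot ℝ)) : Prop :=
  TropStable f ∧ ∃ δ' : ℝ, 0 < δ' ∧ ∀ x0 : Fin n → WithBot ℝ, tnorm x0 < δ' →
    Filter.Tendsto (fun t : ℕ => tnorm (f^[t] x0)) Filter.atTop (nhds 0)

/-- The map `g(x,y) = max(x, y, (x+y)/3)`, with `(x+y)/3 = -∞` if `x = -∞` or `y = -∞`. -/
noncomputable def g9 (x y : WithBot ℝ) : WithBot ℝ :=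
  max (max x y) (WithBot.map (fun t : ℝ => t / 3) (x + y))

lemma E_bot : E ⊥ = 0 := rfl
lemma E_coe (t : ℝ) : E (t : WithBot ℝ) = Real.exp t := rfl
lemma E_nonneg (a : WithBot ℝ) : 0 ≤ E a := by
  cases a with
  | bot => simp [E_bot]
  | coe t => exact (Real.exp_pos t).le
lemma E_mono : Monotone E := by
  intro a b h
  cases a with
  | bot => simpa [E_bot] using E_nonneg b
  | coe s =>
    cases b with
    | bot => simp at h
    | coe t => exact Real.exp_le_exp.2 (by exact_mod_cast h)
lemma E_max (a b : WithBot ℝ) : E (max a b) = max (E a) (E b) := E_mono.map_max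
lemma E_add_coe (a : WithBot ℝ) (t : ℝ) : E (a + (t : WithBot ℝ)) = E a * Real.exp t := by
  cases a with
  | bot => simp [E_bot]
  | coe s =>
    have : ((s : WithBot ℝ) + t) = ((s + t : ℝ) : WithBot ℝ) := by norm_cast
    rw [this, E_coe, E_coe, Real.exp_add]
lemma sup_univ_fin2 (f : Fin 2 → WithBot ℝ) : Finset.univ.sup f = max (f 0) (f 1) := by
  rw [show (Finset.univ : Finset (Fin 2)) = {0, 1} by decide]
  simp [Finset.sup_insert, max_comm]
lemma g9_left (x : ℝ) : g9 (x : WithBot ℝ) ⊥ = (x : WithBot ℝ) := by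
  simp [g9]
lemma g9_right (y : ℝ) : g9 ⊥ (y : WithBot ℝ) = (y : WithBot ℝ) := by
  simp [g9]
lemma g9_diag (t : ℝ) (ht : t < 0) :
    g9 (t : WithBot ℝ) (t : WithBot ℝ) = (((t + t) / 3 : ℝ) : WithBot ℝ) := by
  have h1 : ((t : WithBot ℝ) + t) = ((t + t : ℝ) : WithBot ℝ) := by norm_cast
  rw [g9, h1, WithBot.map_coe, max_self]
  exact max_eq_right (by exact_mod_cast (by linarith : t ≤ (t + t) / 3))

/-- (i) both tropical derivatives of `g9` at `ε` equal `0`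
(`E(g(x,-∞))/e^x → 1` and `E(g(-∞,y))/e^y → 1`), but (ii) no row vector gives a tropical
linear approximation of `g9` at `ε`; indeed along the diagonal
`|E(g(x,x)) − e^x|/e^x → +∞` as `x → -∞`. -/

theorem stmt_9 :
    (Filter.Tendsto (fun x : ℝ => E (g9 (x : WithBot ℝ) ⊥) / Real.exp x)
      Filter.atBot (nhds 1)) ∧
    (Filter.Tendsto (fun y : ℝ => E (g9 ⊥ (y : WithBot ℝ)) / Real.exp y)
      Filter.atBot (nhds 1)) ∧
    (¬ ∃ a : Fin 2 → WithBot ℝ,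
      IsTropLinApprox (fun v : Fin 2 → WithBot ℝ => g9 (v 0) (v 1)) a) ∧
    Filter.Tendsto (fun x : ℝ =>
      |E (g9 (x : WithBot ℝ) (x : WithBot ℝ)) - Real.exp x| / Real.exp x)
      Filter.atBot Filter.atTop := by
  refine ⟨?_, ?_, ?_, ?_⟩
  · have h : ∀ x : ℝ, E (g9 (x : WithBot ℝ) ⊥) / Real.exp x = 1 := fun x => by
      rw [g9_left, E_coe, div_self (Real.exp_ne_zero x)]
    simp only [h]; exact tendsto_const_nhds
  · have h : ∀ y : ℝ, E (g9 ⊥ (y : WithBot ℝ)) / Real.exp y = 1 := fun y => by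
      rw [g9_right, E_coe, div_self (Real.exp_ne_zero y)]
    simp only [h]; exact tendsto_const_nhds
  · rintro ⟨a, h⟩
    obtain ⟨δ, hδ, H⟩ := h 1 one_pos
    set M : ℝ := E (a 0) + E (a 1) with hMdef
    have hM : 0 ≤ M := add_nonneg (E_nonneg _) (E_nonneg _)
    have hM1 : (0:ℝ) < 1 + M := by linarith
    set t : ℝ := min (Real.log δ) (min 0 (-3 * Real.log (1 + M))) - 1 with htdef
    have ht1 : t < Real.log δ := by
      have := min_le_left (Real.log δ) (min 0 (-3 * Real.log (1 + M)))
      simp only [htdef]; linarith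
    have ht2 : t < 0 := by
      have h1 := min_le_right (Real.log δ) (min 0 (-3 * Real.log (1 + M)))
      have h2 := min_le_left (0:ℝ) (-3 * Real.log (1 + M))
      simp only [htdef]; linarith
    have ht3 : t < -3 * Real.log (1 + M) := by
      have h1 := min_le_right (Real.log δ) (min 0 (-3 * Real.log (1 + M)))
      have h2 := min_le_right (0:ℝ) (-3 * Real.log (1 + M))
      simp only [htdef]; linarith
    set x : Fin 2 → WithBot ℝ := fun _ => (t : WithBot ℝ) with hxdef
    have hsup : Finset.univ.sup x = (t : WithBot ℝ) :=
      Finset.sup_const Finset.univ_nonempty _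
    have hnorm : tnorm x = Real.exp t := by rw [tnorm, hsup, E_coe]
    have hpos : 0 < tnorm x := by rw [hnorm]; exact Real.exp_pos t
    have hlt : tnorm x < δ := by
      rw [hnorm]
      calc Real.exp t < Real.exp (Real.log δ) := Real.exp_lt_exp.2 ht1
        _ = δ := Real.exp_log hδ
    have hdot : E (tdot a x) ≤ M * Real.exp t := by
      rw [tdot]
      have : (Finset.univ.sup fun j => a j + x j) = max (a 0 + x 0) (a 1 + x 1) :=
        sup_univ_fin2 _
      rw [this]
      show E ((a 0 + (t : WithBot ℝ)) ⊔ (a 1 + (t : WithBot ℝ))) ≤ M * Real.exp t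
      rw [E_max, E_add_coe, E_add_coe]
      have he := (Real.exp_pos t).le
      apply max_le <;> nlinarith [E_nonneg (a 0), E_nonneg (a 1)]
    have hg : E (g9 (x 0) (x 1)) = Real.exp ((t + t) / 3) := by
      show E (g9 (t : WithBot ℝ) (t : WithBot ℝ)) = _
      rw [g9_diag t ht2, E_coe]
    have hH := H x hpos hlt
    simp only [hg, hnorm, one_mul] at hH
    clear_value x t M
    have key : Real.exp ((t + t) / 3) ≤ (1 + M) * Real.exp t := by
      have h2 := (abs_le.1 hH).2
      have h3 : (1 + M) * Real.exp t = Real.exp t + M * Real.exp t := by ring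
      rw [h3]; linarith [h2, hdot]
    have hexp : Real.exp ((t + t) / 3) = Real.exp (-t / 3) * Real.exp t := by
      rw [← Real.exp_add]; ring_nf
    rw [hexp] at key
    have key2 : Real.exp (-t / 3) ≤ 1 + M :=
      le_of_mul_le_mul_right key (Real.exp_pos t)
    have key3 : -t / 3 ≤ Real.log (1 + M) := by
      have := Real.exp_le_exp.1 (key2.trans_eq (Real.exp_log hM1).symm)
      exact this
    linarith
  · have hcong : ∀ᶠ x : ℝ in Filter.atBot,
        Real.exp (-x / 3) - 1 =
          |E (g9 (x : WithBot ℝ) (x : WithBot ℝ)) - Real.exp x| / Real.exp x := by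
      filter_upwards [Filter.eventually_lt_atBot (0:ℝ)] with x hx
      rw [g9_diag x hx, E_coe]
      have hle : Real.exp x ≤ Real.exp ((x + x) / 3) :=
        Real.exp_le_exp.2 (by linarith)
      rw [abs_of_nonneg (by linarith)]
      rw [sub_div, div_self (Real.exp_ne_zero x)]
      congr 1
      rw [← Real.exp_sub]
      congr 1
      ring
    have h1 : Filter.Tendsto (fun x : ℝ => Real.exp (-x / 3) - 1)
        Filter.atBot Filter.atTop := by
      apply Filter.tendsto_atTop_add_const_right
      exact Real.tendsto_exp_atTop.comp
        (Filter.Tendsto.atTop_div_const (by norm_num) Filter.tendsto_neg_atBot_atTop)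
    exact Filter.Tendsto.congr' hcong h1
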